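/- arXiv:2511.16396 — 2 statements merged into one kernel-verified Lean document; each statement's English description precedes it below -/
import Mathlib

section
/- Let q ∈ ℂ with 0 < |q| < 1. Define the Appell–Lerch series m(x,q,z) := (1/j(z;q)) · Σ_{r ∈ ℤ} (-1)^r q^{r(r-1)/2} z^r / (1 - q^{r-1} x z), for x, z ∈ ℂ* with neither z nor xz an integral power of q. Then m(x,q,z) = x⁻¹ · m(x⁻¹, q, z⁻¹). -/
/-! Peeling the factor `1 - z` off `(z;q)_∞` and `1 - z⁻¹` off `(z⁻¹;q)_∞` gives
`j(z⁻¹;q) = -z⁻¹ j(z;q)`. Since `(2 - r)(1 - r)/2 = r(r - 1)/2 + (1 - r)`, the `(2 - r)`-th term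
of the series for `m(x⁻¹,q,z⁻¹)` is `-x/z` times the `r`-th term of the series for `m(x,q,z)`.
The factors `-z` and `-x/z` multiply to `x`, cancelling the prefactor `x⁻¹`. -/

noncomputable def qPoch (x q : ℂ) : ℂ := ∏' k : ℕ, (1 - x * q ^ k)

noncomputable def jP (z q : ℂ) : ℂ := qPoch z q * qPoch (q / z) q * qPoch q q

noncomputable def mAL (x q z : ℂ) : ℂ :=
  (1 / jP z q) * ∑' r : ℤ, ((-1 : ℂ) ^ r * q ^ (r * (r - 1) / 2) * z ^ r) /
    (1 - q ^ (r - 1) * x * z)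

lemma multipliable_one_sub_mul_pow (x : ℂ) {q : ℂ} (hq : ‖q‖ < 1) :
    Multipliable fun k : ℕ ↦ 1 - x * q ^ k := by
  simpa [sub_eq_add_neg] using Complex.multipliable_one_add_of_summable
    ((summable_geometric_of_norm_lt_one hq).mul_left x).neg

lemma qPoch_eq_one_sub_mul_qPoch (x : ℂ) {q : ℂ} (hq : ‖q‖ < 1) :
    qPoch x q = (1 - x) * qPoch (x * q) q := by
  have hm : Multipliable fun k : ℕ ↦ 1 - x * q ^ (k + 1) :=
    (multipliable_one_sub_mul_pow (x * q) hq).congr fun k ↦ by ring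
  rw [qPoch, qPoch, tprod_eq_zero_mul' (f := fun k ↦ 1 - x * q ^ k) hm, pow_zero, mul_one]
  exact congrArg _ (tprod_congr fun k ↦ by ring)

lemma jP_inv {z : ℂ} (q : ℂ) (hz : z ≠ 0) (hq : ‖q‖ < 1) :
    jP z⁻¹ q = -z⁻¹ * jP z q := by
  have hinv : 1 - z⁻¹ = -z⁻¹ * (1 - z) := by field_simp; ring
  rw [jP, jP, qPoch_eq_one_sub_mul_qPoch z⁻¹ hq, qPoch_eq_one_sub_mul_qPoch z hq, hinv,
    div_inv_eq_mul, div_eq_inv_mul, mul_comm q z]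
  ring

noncomputable def mALSummand (x q z : ℂ) (r : ℤ) : ℂ :=
  (-1 : ℂ) ^ r * q ^ (r * (r - 1) / 2) * z ^ r / (1 - q ^ (r - 1) * x * z)

lemma mAL_eq_div_tsum (x q z : ℂ) : mAL x q z = (1 / jP z q) * ∑' r, mALSummand x q z r := rfl

lemma neg_one_zpow_two_sub {α : Type*} [DivisionRing α] (s : ℤ) :
    (-1 : α) ^ (2 - s) = (-1) ^ s := by
  simp [neg_one_zpow_eq_ite, Int.even_sub]

lemma two_sub_mul_one_sub_div_two (s : ℤ) :
    (2 - s) * (1 - s) / 2 = s * (s - 1) / 2 + (1 - s) := by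
  rw [show (2 - s) * (1 - s) = s * (s - 1) + (1 - s) * 2 by ring,
    Int.add_mul_ediv_right _ _ two_ne_zero]

lemma mALSummand_inv_two_sub {q x z : ℂ} (hq0 : q ≠ 0) (hx : x ≠ 0) (hz : z ≠ 0) (s : ℤ) :
    mALSummand x⁻¹ q z⁻¹ (2 - s) = -(x / z) * mALSummand x q z s := by
  have hden : 1 - q ^ (2 - s - 1) * x⁻¹ * z⁻¹ =
      -(q ^ (1 - s) * x⁻¹ * z⁻¹) * (1 - q ^ (s - 1) * x * z) := by
    have : q ^ (1 - s) * q ^ (s - 1) = 1 := by rw [← zpow_add₀ hq0]; norm_num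
    rw [show 2 - s - 1 = 1 - s by ring]
    field_simp
    linear_combination (-(x * z)) * this
  have hzpow : z⁻¹ ^ (2 - s) = z ^ s / z ^ 2 := by
    rw [inv_zpow', neg_sub, zpow_sub₀ hz]; rfl
  rw [mALSummand, mALSummand, hden, neg_one_zpow_two_sub, show 2 - s - 1 = 1 - s by ring,
    two_sub_mul_one_sub_div_two, zpow_add₀ hq0, hzpow]
  field_simp

lemma tsum_mALSummand_inv {q x z : ℂ} (hq0 : q ≠ 0) (hx : x ≠ 0) (hz : z ≠ 0) :
    ∑' r, mALSummand x⁻¹ q z⁻¹ r = -(x / z) * ∑' r, mALSummand x q z r := by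
  rw [← tsum_mul_left, ← (Equiv.subLeft 2).tsum_eq]
  exact tsum_congr (mALSummand_inv_two_sub hq0 hx hz)

theorem mAL_inv_general (q x z : ℂ) (hq0 : q ≠ 0) (hq : ‖q‖ < 1)
    (hx : x ≠ 0) (hz : z ≠ 0) :
    mAL x q z = x⁻¹ * mAL x⁻¹ q z⁻¹ := by
  rw [mAL_eq_div_tsum, mAL_eq_div_tsum, tsum_mALSummand_inv hq0 hx hz, jP_inv q hz hq]
  simp only [one_div, mul_inv, inv_neg, inv_inv]
  field_simp

theorem mAL_inv (q x z : ℂ) (hq0 : q ≠ 0) (hq : ‖q‖ < 1)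
    (hx : x ≠ 0) (hz : z ≠ 0)
    (hz' : ∀ k : ℤ, z ≠ q ^ k) (hxz : ∀ k : ℤ, x * z ≠ q ^ k) :
    mAL x q z = x⁻¹ * mAL x⁻¹ q z⁻¹ :=
  mAL_inv_general q x z hq0 hq hx hz
end

section
/- Let q ∈ ℂ with 0 < |q| < 1. With m(x,q,z) defined as the Appell–Lerch series (1/j(z;q)) · Σ_{r ∈ ℤ} (-1)^r q^{r(r-1)/2} z^r / (1 - q^{r-1} x z), one has m(q, q², -1) = 1/2. -/
open Finset Filter Topology

/-!
With `t = q²` the `r`-th term of the series is `t^(r(r-1)/2) / (1 + q^(2r-1))`, and the terms at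
`r` and `1 - r` add up to `t^(r(r-1)/2)` because `1/(1+u) + 1/(1+u⁻¹) = 1`. So the series is half
of the theta series `∑ t^(r(r-1)/2)`, which by the Jacobi triple product is `j(-1; t)`.

The triple product `j(z; t) = ∑ (-1)^n t^(n(n-1)/2) z^n` is the limit `N → ∞` of its finite
form `(z; t)_N (t/z; t)_N = ∑_{|r| ≤ N} [2N, N+r]_t t^(r(r-1)/2) (-z)^r`, which is the `q`-binomial
theorem for `(z t^(-N); t)_{2N}`. The Gaussian binomials are bounded uniformly and
`[2N, N+r]_t → 1/(t; t)_∞`, so Tannery's theorem applies.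
-/

lemma Int.add_mul_add_sub_one_ediv_two (a b : ℤ) :
    (a + b) * (a + b - 1) / 2 = a * (a - 1) / 2 + a * b + b * (b - 1) / 2 := by
  obtain ⟨u, hu⟩ := Int.even_mul_pred_self a
  obtain ⟨v, hv⟩ := Int.even_mul_pred_self b
  have h : (a + b) * (a + b - 1) = (u + v + a * b) + (u + v + a * b) := by
    linear_combination hu + hv
  rw [h, hu, hv]
  omega

lemma Int.natCast_choose_two (j : ℕ) : ((j.choose 2 : ℕ) : ℤ) = j * (j - 1) / 2 := by
  induction j with
  | zero => rfl
  | succ j ih =>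
    rw [Nat.choose_succ_succ', Nat.choose_one_right, Nat.cast_add, ih, Nat.cast_succ,
      Int.add_mul_add_sub_one_ediv_two]
    norm_num
    ring

lemma Finset.sum_Icc_neg_eq_sum_range {M : Type*} [AddCommMonoid M] (f : ℤ → M) (N : ℕ) :
    ∑ r ∈ Icc (-(N : ℤ)) N, f r = ∑ j ∈ range (2 * N + 1), f (j - N) := by
  symm
  refine sum_nbij' (fun j => (j : ℤ) - N) (fun r => (N + r).toNat) ?_ ?_ ?_ ?_ fun _ _ => rfl <;>
    intro x hx <;> simp only [mem_range, mem_Icc] at hx ⊢ <;> omega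

section GaussBinom

variable {R : Type*} [CommRing R]

def gaussBinom (t : R) : ℕ → ℕ → R
  | _, 0 => 1
  | 0, _ + 1 => 0
  | n + 1, k + 1 => gaussBinom t n (k + 1) + t ^ (n - k) * gaussBinom t n k

@[simp]
lemma gaussBinom_zero_right (t : R) (n : ℕ) : gaussBinom t n 0 = 1 := by
  cases n <;> rfl

lemma gaussBinom_succ_succ (t : R) (n k : ℕ) :
    gaussBinom t (n + 1) (k + 1) = gaussBinom t n (k + 1) + t ^ (n - k) * gaussBinom t n k :=
  rfl

lemma gaussBinom_eq_zero_of_lt (t : R) {n k : ℕ} (h : n < k) : gaussBinom t n k = 0 := by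
  induction n generalizing k with
  | zero => obtain ⟨k, rfl⟩ := Nat.exists_eq_succ_of_ne_zero h.ne'; rfl
  | succ n ih =>
    obtain ⟨k, rfl⟩ := Nat.exists_eq_succ_of_ne_zero (Nat.ne_zero_of_lt h)
    rw [gaussBinom_succ_succ, ih (by omega), ih (by omega), mul_zero, add_zero]

/-- The finite `q`-Pochhammer symbol `(x; t)_n`; `qPoch x t` is `(x; t)_∞`. -/
def qPochhammer (x t : R) (n : ℕ) : R := ∏ k ∈ range n, (1 - x * t ^ k)

lemma qPochhammer_succ (x t : R) (n : ℕ) :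
    qPochhammer x t (n + 1) = qPochhammer x t n * (1 - x * t ^ n) :=
  prod_range_succ _ _

theorem qPochhammer_eq_sum_gaussBinom (z t : R) (n : ℕ) :
    qPochhammer z t n = ∑ j ∈ range (n + 1), t ^ j.choose 2 * gaussBinom t n j * (-z) ^ j := by
  induction n with
  | zero => simp [qPochhammer]
  | succ n ih =>
    set S := ∑ j ∈ range (n + 1), t ^ j.choose 2 * gaussBinom t n j * (-z) ^ j
    have hshift : ∀ j ∈ range (n + 1), t ^ (j + 1).choose 2 * gaussBinom t (n + 1) (j + 1) *
        (-z) ^ (j + 1) = t ^ (j + 1).choose 2 * gaussBinom t n (j + 1) * (-z) ^ (j + 1) +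
          -z * t ^ n * (t ^ j.choose 2 * gaussBinom t n j * (-z) ^ j) := by
      intro j hj
      have hjn : j + (n - j) = n := Nat.add_sub_of_le (Nat.lt_succ_iff.mp (mem_range.mp hj))
      rw [gaussBinom_succ_succ, Nat.choose_succ_succ', Nat.choose_one_right, ← hjn]
      simp only [Nat.add_sub_cancel_left, pow_add, pow_succ]
      ring
    have hshifted : ∑ j ∈ range (n + 1),
        t ^ (j + 1).choose 2 * gaussBinom t n (j + 1) * (-z) ^ (j + 1) + 1 = S := by
      have hS : S = ∑ j ∈ range (n + 1 + 1), t ^ j.choose 2 * gaussBinom t n j * (-z) ^ j := by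
        rw [sum_range_succ _ (n + 1), gaussBinom_eq_zero_of_lt t (Nat.lt_succ_self n)]
        simp [S]
      rw [hS, sum_range_succ' _ (n + 1)]
      simp
    rw [qPochhammer_succ, ih, sum_range_succ', sum_congr rfl hshift, sum_add_distrib, ← mul_sum]
    simp only [gaussBinom_zero_right, Nat.choose_zero_succ, pow_zero, mul_one]
    linear_combination -hshifted

theorem gaussBinom_mul_qPochhammer (t : R) {n k : ℕ} (h : k ≤ n) :
    gaussBinom t n k * (qPochhammer t t k * qPochhammer t t (n - k)) = qPochhammer t t n := by
  induction n generalizing k with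
  | zero => obtain rfl := Nat.le_zero.mp h; simp [qPochhammer]
  | succ n ih =>
    rcases k with _ | k
    · simp [qPochhammer]
    have hk : k ≤ n := Nat.succ_le_succ_iff.mp h
    have hleft : gaussBinom t n (k + 1) * (qPochhammer t t (k + 1) * qPochhammer t t (n - k)) =
        qPochhammer t t n * (1 - t ^ (n - k)) := by
      rcases hk.lt_or_eq with hlt | rfl
      · rw [show n - k = n - (k + 1) + 1 by omega, qPochhammer_succ t t (n - (k + 1)), pow_succ']
        linear_combination (1 - t * t ^ (n - (k + 1))) * ih (k := k + 1) hlt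
      · simp [gaussBinom_eq_zero_of_lt t (Nat.lt_succ_self k)]
    have hright : t ^ (n - k) * gaussBinom t n k *
        (qPochhammer t t (k + 1) * qPochhammer t t (n - k)) =
          t ^ (n - k) * qPochhammer t t n * (1 - t * t ^ k) := by
      rw [qPochhammer_succ, ← ih hk]
      ring
    have hpow : t ^ (n - k) * (t * t ^ k) = t * t ^ n := by
      rw [← pow_succ', ← pow_add, ← pow_succ']
      congr 1
      omega
    rw [gaussBinom_succ_succ, Nat.succ_sub_succ, add_mul, hleft, hright, qPochhammer_succ]
    linear_combination (-qPochhammer t t n) * hpow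

end GaussBinom

section FiniteTripleProduct

variable {K : Type*} [Field K]

-- The exponent `N(N+1)/2` is written as `r(r-1)/2` at `r = -N`, the shape in which it meets
-- `Int.add_mul_add_sub_one_ediv_two` after the shift `j ↦ j - N` below.
lemma prod_one_sub_mul_zpow_neg_succ {t z : K} (ht : t ≠ 0) (hz : z ≠ 0) (N : ℕ) :
    ∏ k ∈ range N, (1 - z * t ^ (-(k + 1 : ℤ))) =
      (-z) ^ N * t ^ (-((-N : ℤ) * (-N - 1) / 2)) * qPochhammer (t / z) t N := by
  induction N with
  | zero => simp [qPochhammer]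
  | succ N ih =>
    have htri : (-(N + 1 : ℕ) : ℤ) * (-(N + 1 : ℕ) - 1) / 2 =
        (-N : ℤ) * (-N - 1) / 2 + (N + 1) := by
      rw [show (-(N + 1 : ℕ) : ℤ) = -N + -1 by push_cast; ring,
        Int.add_mul_add_sub_one_ediv_two]
      norm_num
      ring
    have hinv : t ^ (-(N + 1 : ℤ)) * t ^ (N + 1) = 1 := by
      rw [zpow_neg, ← zpow_natCast]
      push_cast
      exact inv_mul_cancel₀ (zpow_ne_zero _ ht)
    have hfac :
        1 - z * t ^ (-(N + 1 : ℤ)) = -z * t ^ (-(N + 1 : ℤ)) * (1 - t / z * t ^ N) := by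
      field_simp
      linear_combination -hinv
    rw [prod_range_succ, ih, qPochhammer_succ, htri, hfac, neg_add ((-N : ℤ) * (-N - 1) / 2),
      zpow_add₀ ht, pow_succ]
    ring

theorem qPochhammer_mul_qPochhammer_div_eq_sum {t z : K} (ht : t ≠ 0) (hz : z ≠ 0) (N : ℕ) :
    qPochhammer z t N * qPochhammer (t / z) t N = ∑ r ∈ Icc (-(N : ℤ)) N,
      gaussBinom t (2 * N) (N + r).toNat * (t ^ (r * (r - 1) / 2) * (-z) ^ r) := by
  have hz' : -z ≠ 0 := neg_ne_zero.mpr hz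
  set w := z * t ^ (-(N : ℤ))
  have hw : ∀ k : ℕ, w * t ^ k = z * t ^ ((k : ℤ) - N) := fun k => by
    rw [mul_assoc, ← zpow_natCast, ← zpow_add₀ ht, neg_add_eq_sub]
  have hsplit : qPochhammer w t (2 * N) = (-z) ^ N * t ^ (-((-N : ℤ) * (-N - 1) / 2)) *
      qPochhammer (t / z) t N * qPochhammer z t N := by
    rw [← prod_one_sub_mul_zpow_neg_succ ht hz, qPochhammer, qPochhammer, two_mul,
      prod_range_add, ← prod_range_reflect]
    congr 1 <;> refine prod_congr rfl fun k hk => ?_ <;> have := mem_range.mp hk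
    · rw [hw]
      congr 3
      omega
    · rw [hw, show ((N + k : ℕ) : ℤ) - N = k by push_cast; ring, zpow_natCast]
  have hterm : ∀ j ∈ range (2 * N + 1), t ^ j.choose 2 * gaussBinom t (2 * N) j * (-w) ^ j =
      (-z) ^ N * t ^ (-((-N : ℤ) * (-N - 1) / 2)) *
        (gaussBinom t (2 * N) (N + ((j : ℤ) - N)).toNat *
          (t ^ (((j : ℤ) - N) * ((j : ℤ) - N - 1) / 2) * (-z) ^ ((j : ℤ) - N))) := by
    intro j _
    have hw' : (-w) ^ j = (-z) ^ j * t ^ ((j : ℤ) * -N) := by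
      rw [← neg_mul, mul_pow, ← zpow_natCast (t ^ _), ← zpow_mul, mul_comm (-(N : ℤ))]
    have htri : t ^ (((j : ℤ) - N) * ((j : ℤ) - N - 1) / 2) =
        t ^ j.choose 2 * t ^ ((j : ℤ) * -N) * t ^ ((-N : ℤ) * (-N - 1) / 2) := by
      rw [sub_eq_add_neg (j : ℤ), Int.add_mul_add_sub_one_ediv_two, zpow_add₀ ht,
        zpow_add₀ ht, ← Int.natCast_choose_two, zpow_natCast]
    rw [show (N : ℤ) + (j - N) = j by ring, Int.toNat_natCast, hw', htri,
      zpow_sub₀ hz', zpow_natCast, zpow_natCast, zpow_neg]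
    field_simp [pow_ne_zero N hz']
  apply mul_left_cancel₀ (mul_ne_zero (pow_ne_zero N hz') (zpow_ne_zero _ ht))
  rw [mul_comm (qPochhammer z t N), ← mul_assoc, ← hsplit, qPochhammer_eq_sum_gaussBinom,
    sum_Icc_neg_eq_sum_range, mul_sum]
  exact sum_congr rfl hterm

end FiniteTripleProduct

lemma summable_of_succ_eq_pow_mul {f : ℕ → ℂ} {t c : ℂ} (ht : ‖t‖ < 1)
    (hf : ∀ n, f (n + 1) = t ^ n * c * f n) : Summable f := by
  have hlim : Tendsto (fun n : ℕ => ‖t‖ ^ n * ‖c‖) atTop (𝓝 0) := by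
    simpa using (tendsto_pow_atTop_nhds_zero_of_lt_one (norm_nonneg t) ht).mul_const ‖c‖
  refine summable_of_ratio_norm_eventually_le one_half_lt_one ?_
  filter_upwards [hlim.eventually_le_const one_half_pos] with n hn
  rw [hf, norm_mul, norm_mul, norm_pow]
  exact mul_le_mul_of_nonneg_right hn (norm_nonneg _)

lemma summable_zpow_mul_zpow {t x : ℂ} (ht0 : t ≠ 0) (hx : x ≠ 0) (ht : ‖t‖ < 1) :
    Summable fun r : ℤ => t ^ (r * (r - 1) / 2) * x ^ r := by
  have hstep : ∀ r : ℤ, t ^ ((r + 1) * (r + 1 - 1) / 2) * x ^ (r + 1) =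
      t ^ r * x * (t ^ (r * (r - 1) / 2) * x ^ r) := by
    intro r
    rw [Int.add_mul_add_sub_one_ediv_two, zpow_add₀ ht0, zpow_add₀ ht0, zpow_add_one₀ hx]
    norm_num
    ring
  refine Summable.of_nat_of_neg (summable_of_succ_eq_pow_mul (c := x) ht fun n => ?_)
    (summable_of_succ_eq_pow_mul (c := t / x) ht fun n => ?_)
  · push_cast
    rw [hstep, zpow_natCast]
  · have h := hstep (-((n + 1 : ℕ) : ℤ))
    rw [show -((n + 1 : ℕ) : ℤ) + 1 = -n by push_cast; ring] at h
    rw [h, zpow_neg t, zpow_natCast, pow_succ]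
    field_simp

lemma mul_pow_ne_one_of_norm_le_one {x q : ℂ} (hx : ‖x‖ ≤ 1) (hx1 : x ≠ 1) (hq : ‖q‖ < 1)
    (k : ℕ) : x * q ^ k ≠ 1 := by
  rcases k with _ | k
  · simpa using hx1
  · refine fun h => (?_ : ‖x * q ^ (k + 1)‖ < 1).ne (by rw [h, norm_one])
    rw [norm_mul, norm_pow]
    exact (mul_le_of_le_one_left (by positivity) hx).trans_lt
      (pow_lt_one₀ (norm_nonneg q) hq k.succ_ne_zero)

lemma summable_norm_neg_mul_pow (x : ℂ) {q : ℂ} (hq : ‖q‖ < 1) :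
    Summable fun k : ℕ => ‖-(x * q ^ k)‖ := by
  simpa [norm_mul, norm_pow] using
    (summable_geometric_of_lt_one (norm_nonneg q) hq).mul_left ‖x‖

lemma tendsto_qPochhammer (x : ℂ) {q : ℂ} (hq : ‖q‖ < 1) :
    Tendsto (qPochhammer x q) atTop (𝓝 (qPoch x q)) := by
  have h :=
    (multipliable_one_add_of_summable (summable_norm_neg_mul_pow x hq)).hasProd.tendsto_prod_nat
  simp only [← sub_eq_add_neg] at h
  exact h

lemma qPoch_ne_zero {x q : ℂ} (hq : ‖q‖ < 1) (hx : ∀ k : ℕ, x * q ^ k ≠ 1) :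
    qPoch x q ≠ 0 := by
  simpa [qPoch, sub_eq_add_neg] using tprod_one_add_ne_zero_of_summable
    (fun k => by simpa [sub_eq_add_neg] using sub_ne_zero.mpr (hx k).symm)
    (summable_norm_neg_mul_pow x hq)

lemma qPochhammer_ne_zero {x q : ℂ} (hx : ∀ k : ℕ, x * q ^ k ≠ 1) (n : ℕ) :
    qPochhammer x q n ≠ 0 :=
  prod_ne_zero_iff.mpr fun k _ => sub_ne_zero.mpr (hx k).symm

lemma self_mul_pow_ne_one {t : ℂ} (ht : ‖t‖ < 1) (k : ℕ) : t * t ^ k ≠ 1 :=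
  mul_pow_ne_one_of_norm_le_one ht.le (fun h => by simp [h] at ht) ht k

lemma gaussBinom_eq_div {t : ℂ} (ht : ‖t‖ < 1) {n k : ℕ} (hk : k ≤ n) :
    gaussBinom t n k = qPochhammer t t n / (qPochhammer t t k * qPochhammer t t (n - k)) :=
  eq_div_of_mul_eq (mul_ne_zero (qPochhammer_ne_zero (self_mul_pow_ne_one ht) k)
    (qPochhammer_ne_zero (self_mul_pow_ne_one ht) _)) (gaussBinom_mul_qPochhammer t hk)

lemma exists_norm_gaussBinom_le {t : ℂ} (ht : ‖t‖ < 1) :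
    ∃ C, ∀ n k, ‖gaussBinom t n k‖ ≤ C := by
  have hP := tendsto_qPochhammer t ht
  obtain ⟨A, hA⟩ := (Metric.isBounded_range_of_tendsto _ hP).exists_norm_le
  obtain ⟨B, hB⟩ := (Metric.isBounded_range_of_tendsto _
    (hP.inv₀ (qPoch_ne_zero ht (self_mul_pow_ne_one ht)))).exists_norm_le
  have hA0 : 0 ≤ A := (norm_nonneg _).trans (hA _ ⟨0, rfl⟩)
  have hB0 : 0 ≤ B := (norm_nonneg _).trans (hB _ ⟨0, rfl⟩)
  refine ⟨A * B * B, fun n k => ?_⟩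
  rcases le_or_gt k n with hk | hk
  · rw [gaussBinom_eq_div ht hk, div_mul_eq_div_div, div_eq_mul_inv, div_eq_mul_inv, norm_mul,
      norm_mul]
    gcongr
    exacts [hA _ ⟨n, rfl⟩, hB _ ⟨k, rfl⟩, hB _ ⟨n - k, rfl⟩]
  · rw [gaussBinom_eq_zero_of_lt t hk, norm_zero]
    positivity

lemma tendsto_gaussBinom_two_mul {t : ℂ} (ht : ‖t‖ < 1) (r : ℤ) :
    Tendsto (fun N : ℕ => gaussBinom t (2 * N) (N + r).toNat) atTop (𝓝 (qPoch t t)⁻¹) := by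
  have hP := tendsto_qPochhammer t ht
  have hP0 := qPoch_ne_zero ht (self_mul_pow_ne_one ht)
  have hplus : Tendsto (fun N : ℕ => ((N : ℤ) + r).toNat) atTop atTop :=
    tendsto_atTop_atTop.mpr fun b => ⟨b + r.natAbs, fun N hN => by omega⟩
  have hminus : Tendsto (fun N : ℕ => ((N : ℤ) - r).toNat) atTop atTop :=
    tendsto_atTop_atTop.mpr fun b => ⟨b + r.natAbs, fun N hN => by omega⟩
  have hlim := (hP.comp (tendsto_id.const_mul_atTop' two_pos)).div
    ((hP.comp hplus).mul (hP.comp hminus)) (mul_ne_zero hP0 hP0)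
  rw [div_mul_cancel_left₀ hP0] at hlim
  refine hlim.congr' ?_
  filter_upwards [eventually_ge_atTop r.natAbs] with N hN
  rw [gaussBinom_eq_div ht (by omega), show 2 * N - (N + r).toNat = ((N : ℤ) - r).toNat by omega]
  rfl

theorem jP_eq_tsum {z t : ℂ} (hz : z ≠ 0) (ht0 : t ≠ 0) (ht : ‖t‖ < 1) :
    jP z t = ∑' n : ℤ, (-1) ^ n * t ^ (n * (n - 1) / 2) * z ^ n := by
  set a : ℤ → ℂ := fun r => t ^ (r * (r - 1) / 2) * (-z) ^ r
  set F : ℕ → ℤ → ℂ := fun N r =>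
    if r ∈ Icc (-(N : ℤ)) N then gaussBinom t (2 * N) (N + r).toNat * a r else 0
  have hF : ∀ N, ∑' r, F N r = qPochhammer z t N * qPochhammer (t / z) t N := fun N => by
    rw [qPochhammer_mul_qPochhammer_div_eq_sum ht0 hz,
      tsum_eq_sum (s := Icc (-(N : ℤ)) N) fun r hr => if_neg hr]
    exact sum_congr rfl fun r hr => if_pos hr
  have hpointwise : ∀ r, Tendsto (F · r) atTop (𝓝 ((qPoch t t)⁻¹ * a r)) := fun r => by
    refine ((tendsto_gaussBinom_two_mul ht r).mul_const (a r)).congr' ?_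
    filter_upwards [eventually_ge_atTop r.natAbs] with N hN
    exact (if_pos (mem_Icc.mpr (by omega))).symm
  obtain ⟨C, hC⟩ := exists_norm_gaussBinom_le ht
  have hbound : ∀ N r, ‖F N r‖ ≤ C * ‖a r‖ := fun N r => by
    by_cases hr : r ∈ Icc (-(N : ℤ)) N
    · simp only [F, if_pos hr, norm_mul]
      exact mul_le_mul_of_nonneg_right (hC _ _) (norm_nonneg _)
    · simp only [F, if_neg hr, norm_zero]
      exact mul_nonneg ((norm_nonneg _).trans (hC 0 0)) (norm_nonneg _)
  have hlim := tendsto_tsum_of_dominated_convergence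
    ((summable_zpow_mul_zpow ht0 (neg_ne_zero.mpr hz) ht).norm.mul_left C) hpointwise
    (Eventually.of_forall hbound)
  simp only [hF, tsum_mul_left] at hlim
  have hprod := tendsto_nhds_unique hlim
    ((tendsto_qPochhammer z ht).mul (tendsto_qPochhammer (t / z) ht))
  rw [jP, ← hprod, mul_comm, mul_inv_cancel_left₀ (qPoch_ne_zero ht (self_mul_pow_ne_one ht))]
  refine tsum_congr fun r => ?_
  rw [show a r = t ^ (r * (r - 1) / 2) * (-1 * z) ^ r by simp [a], mul_zpow]
  ring

lemma jP_ne_zero {z t : ℂ} (hz : ‖z‖ = 1) (hz1 : z ≠ 1) (ht : ‖t‖ < 1) :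
    jP z t ≠ 0 := by
  have htz : ‖t / z‖ < 1 := by rwa [norm_div, hz, div_one]
  exact mul_ne_zero (mul_ne_zero (qPoch_ne_zero ht (mul_pow_ne_one_of_norm_le_one hz.le hz1 ht))
    (qPoch_ne_zero ht (mul_pow_ne_one_of_norm_le_one htz.le (fun h => by simp [h] at htz) ht)))
    (qPoch_ne_zero ht (self_mul_pow_ne_one ht))

lemma Summable.tsum_add_comp_one_sub {E : Type*} [AddCommMonoid E] [TopologicalSpace E]
    [ContinuousAdd E] [T2Space E] {f : ℤ → E} (hf : Summable f) :
    ∑' r, (f r + f (1 - r)) = 2 • ∑' r, f r := by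
  have hf' : Summable fun r => f (1 - r) := (Equiv.subLeft (1 : ℤ)).summable_iff.mpr hf
  rw [hf.tsum_add hf', two_nsmul]
  exact congrArg _ ((Equiv.subLeft (1 : ℤ)).tsum_eq f)

lemma inv_one_add_add_inv_one_add_inv {K : Type*} [Field K] {u : K} (hu : u ≠ 0)
    (hu1 : 1 + u ≠ 0) : (1 + u)⁻¹ + (1 + u⁻¹)⁻¹ = 1 := by
  rw [show 1 + u⁻¹ = (1 + u) / u by field_simp; ring, inv_div]
  field_simp

lemma norm_inv_one_add_le {u : ℂ} {a : ℝ} (hu : ‖u‖ ≤ a) (ha : a < 1) :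
    ‖(1 + u)⁻¹‖ ≤ (1 - a)⁻¹ := by
  have h : 1 ≤ ‖1 + u‖ + ‖u‖ := by simpa using norm_add_le (1 + u) (-u)
  rw [norm_inv]
  exact inv_anti₀ (by linarith) (by linarith)

lemma one_add_zpow_ne_zero {q : ℂ} (hq0 : q ≠ 0) (hq : ‖q‖ < 1) {n : ℤ} (hn : n ≠ 0) :
    1 + q ^ n ≠ 0 := by
  intro h
  have h1 : ‖q‖ ^ n = ‖q‖ ^ (0 : ℤ) := by
    rw [← norm_zpow, eq_neg_of_add_eq_zero_right h, norm_neg, norm_one, zpow_zero]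
  exact hn (zpow_right_injective₀ (norm_pos_iff.mpr hq0) hq.ne h1)

lemma norm_inv_one_add_zpow_le {q : ℂ} (hq0 : q ≠ 0) (hq : ‖q‖ < 1) {n : ℤ} (hn : n ≠ 0) :
    ‖(1 + q ^ n)⁻¹‖ ≤ (1 - ‖q‖)⁻¹ := by
  have hpos : ∀ m : ℤ, 0 < m → ‖(1 + q ^ m)⁻¹‖ ≤ (1 - ‖q‖)⁻¹ := fun m hm => by
    refine norm_inv_one_add_le ?_ hq
    rw [norm_zpow]
    simpa using zpow_le_zpow_right_of_le_one₀ (norm_pos_iff.mpr hq0) hq.le (by omega : 1 ≤ m)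
  rcases hn.lt_or_gt with hn | hn
  · have hsplit : (1 + q ^ n)⁻¹ = q ^ (-n) * (1 + q ^ (-n))⁻¹ := by
      rw [zpow_neg, ← mul_inv, mul_add, mul_one, mul_inv_cancel₀ (zpow_ne_zero n hq0),
        add_comm (q ^ n)]
    rw [hsplit, norm_mul, norm_zpow]
    exact (mul_le_of_le_one_left (norm_nonneg _)
      (zpow_le_one₀ (norm_pos_iff.mpr hq0) hq.le (by omega))).trans (hpos (-n) (by omega))
  · exact hpos n hn

lemma neg_one_zpow_mul_mul_neg_one_zpow {K : Type*} [Field K] (r : ℤ) (a : K) :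
    (-1) ^ r * a * (-1) ^ r = a := by
  rw [mul_comm, ← mul_assoc, ← mul_zpow, neg_one_mul, neg_neg, one_zpow, one_mul]

noncomputable def mALTerm (x q z : ℂ) (r : ℤ) : ℂ :=
  ((-1 : ℂ) ^ r * q ^ (r * (r - 1) / 2) * z ^ r) / (1 - q ^ (r - 1) * x * z)

lemma mALTerm_sq_neg_one {q : ℂ} (hq0 : q ≠ 0) (r : ℤ) :
    mALTerm q (q ^ 2) (-1) r = (q ^ 2) ^ (r * (r - 1) / 2) * (1 + q ^ (2 * r - 1))⁻¹ := by
  have hden : (q ^ 2) ^ (r - 1) * q = q ^ (2 * r - 1) := by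
    rw [← zpow_natCast, ← zpow_mul, ← zpow_add_one₀ hq0]
    push_cast
    ring_nf
  rw [mALTerm, neg_one_zpow_mul_mul_neg_one_zpow, div_eq_mul_inv, mul_neg_one, sub_neg_eq_add,
    hden]

lemma mALTerm_add_one_sub {q : ℂ} (hq0 : q ≠ 0) (hq : ‖q‖ < 1) (r : ℤ) :
    mALTerm q (q ^ 2) (-1) r + mALTerm q (q ^ 2) (-1) (1 - r) = (q ^ 2) ^ (r * (r - 1) / 2) := by
  rw [mALTerm_sq_neg_one hq0, mALTerm_sq_neg_one hq0,
    show (1 - r) * (1 - r - 1) = r * (r - 1) by ring, show 2 * (1 - r) - 1 = -(2 * r - 1) by ring,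
    zpow_neg, ← mul_add,
    inv_one_add_add_inv_one_add_inv (zpow_ne_zero _ hq0) (one_add_zpow_ne_zero hq0 hq (by omega)),
    mul_one]

lemma summable_mALTerm {q : ℂ} (hq0 : q ≠ 0) (hq : ‖q‖ < 1) :
    Summable (mALTerm q (q ^ 2) (-1)) := by
  have ht : ‖q ^ 2‖ < 1 := by rw [norm_pow]; exact pow_lt_one₀ (norm_nonneg q) hq two_ne_zero
  have htheta : Summable fun r : ℤ => (q ^ 2) ^ (r * (r - 1) / 2) := by
    simpa using summable_zpow_mul_zpow (pow_ne_zero 2 hq0) one_ne_zero ht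
  refine Summable.of_norm_bounded (htheta.norm.mul_left (1 - ‖q‖)⁻¹) fun r => ?_
  rw [mALTerm_sq_neg_one hq0, norm_mul, mul_comm]
  exact mul_le_mul_of_nonneg_right (norm_inv_one_add_zpow_le hq0 hq (by omega)) (norm_nonneg _)

theorem mAL_eval (q : ℂ) (hq0 : q ≠ 0) (hq : ‖q‖ < 1) :
    mAL q (q ^ 2) (-1) = 1 / 2 := by
  have ht : ‖q ^ 2‖ < 1 := by rw [norm_pow]; exact pow_lt_one₀ (norm_nonneg q) hq two_ne_zero
  have htheta : jP (-1) (q ^ 2) = ∑' r : ℤ, (q ^ 2) ^ (r * (r - 1) / 2) := by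
    rw [jP_eq_tsum (neg_ne_zero.mpr one_ne_zero) (pow_ne_zero 2 hq0) ht]
    exact tsum_congr fun r => neg_one_zpow_mul_mul_neg_one_zpow r _
  have hpair : 2 * ∑' r, mALTerm q (q ^ 2) (-1) r = jP (-1) (q ^ 2) := by
    rw [two_mul, ← two_nsmul, ← (summable_mALTerm hq0 hq).tsum_add_comp_one_sub, htheta]
    exact tsum_congr (mALTerm_add_one_sub hq0 hq)
  have hj : jP (-1) (q ^ 2) ≠ 0 := jP_ne_zero (by simp) (by norm_num) ht
  change 1 / jP (-1) (q ^ 2) * ∑' r, mALTerm q (q ^ 2) (-1) r = 1 / 2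
  rw [← hpair] at hj ⊢
  field_simp [right_ne_zero_of_mul hj]
end
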